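/- arXiv:1910.12516 — 7 statements merged into one kernel-verified Lean document; each statement's English description precedes it below -/
import Mathlib

section
/- Let (C, τ^C) and (Θ, τ^Θ) be compact Hausdorff spaces and let U : Θ × C → ℝ be jointly continuous. Then the function U* : Θ × CL(C) → ℝ defined by U*(θ, D) := sup_{d ∈ D} U(θ, d) is jointly continuous, where Θ × CL(C) carries the product of τ^Θ and the Fell topology τ_F. -/
/-- The hyperspace of nonempty closed subsets of a topological space. -/
def CL (C : Type*) [TopologicalSpace C] : Type _ :=
  {A : Set C // A.Nonempty ∧ IsClosed A}

/-- The subbase for the Fell topology: all sets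
`V⁻ = {A : A ∩ V ≠ ∅}` and `W⁺ = {A : A ⊆ W}` for `V`, `W` nonempty open. -/
def fellSubbasis (C : Type*) [TopologicalSpace C] : Set (Set (CL C)) :=
  {s | (∃ V : Set C, IsOpen V ∧ V.Nonempty ∧ s = {A : CL C | (A.1 ∩ V).Nonempty}) ∨
       (∃ W : Set C, IsOpen W ∧ W.Nonempty ∧ s = {A : CL C | A.1 ⊆ W})}

/-- The Fell topology on the hyperspace of nonempty closed subsets. -/
instance fellTopology (C : Type*) [TopologicalSpace C] : TopologicalSpace (CL C) :=
  TopologicalSpace.generateFrom (fellSubbasis C)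

/-- The agent's indirect utility over menus: `U*(θ, D) = sup_{d ∈ D} U(θ, d)`. -/
noncomputable def Ustar {Θ C : Type*} [TopologicalSpace C]
    (U : Θ × C → ℝ) (θ : Θ) (D : CL C) : ℝ :=
  sSup ((fun d => U (θ, d)) '' D.1)

/-!
`U*` is upper semicontinuous by the tube lemma: if `U* < y` at `(θ₀, D₀)`, then `U < y'` on a
tube `N × W ⊇ {θ₀} × D₀` for some `y' < y`, and `N × W⁺` is a neighbourhood on which `U* ≤ y'`.
It is lower semicontinuous because if `y < U(θ₀, d₀)` for some `d₀ ∈ D₀`, then `y < U` on a box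
`N × V` around `(θ₀, d₀)`, and every menu in `V⁻` still contains a point of `V`.
Compactness of `C` keeps the suprema finite, so that `U(θ, d) ≤ U*(θ, D)` for `d ∈ D`.
-/

namespace CL

variable {C : Type*} [TopologicalSpace C]

theorem isOpen_setOf_inter_nonempty {V : Set C} (hV : IsOpen V) :
    IsOpen {A : CL C | (A.1 ∩ V).Nonempty} := by
  rcases V.eq_empty_or_nonempty with rfl | hne
  · simp
  · exact TopologicalSpace.isOpen_generateFrom_of_mem (Or.inl ⟨V, hV, hne, rfl⟩)

theorem isOpen_setOf_subset {W : Set C} (hW : IsOpen W) :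
    IsOpen {A : CL C | A.1 ⊆ W} := by
  rcases W.eq_empty_or_nonempty with rfl | hne
  · convert isOpen_empty
    ext A
    simp [Set.subset_empty_iff, A.2.1.ne_empty]
  · exact TopologicalSpace.isOpen_generateFrom_of_mem (Or.inr ⟨W, hW, hne, rfl⟩)

theorem isCompact [CompactSpace C] (A : CL C) : IsCompact A.1 :=
  A.2.2.isCompact

end CL

section Ustar

variable {Θ C : Type*} [TopologicalSpace C] {U : Θ × C → ℝ}

theorem Ustar_le {θ : Θ} {D : CL C} {c : ℝ} (h : ∀ d ∈ D.1, U (θ, d) ≤ c) :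
    Ustar U θ D ≤ c :=
  csSup_le (D.2.1.image _) (Set.forall_mem_image.2 h)

variable [TopologicalSpace Θ] [CompactSpace C]

theorem le_Ustar (hU : Continuous U) {θ : Θ} {D : CL C} {d : C} (hd : d ∈ D.1) :
    U (θ, d) ≤ Ustar U θ D :=
  le_csSup ((D.isCompact.image (hU.comp (.prodMk_right θ))).bddAbove) ⟨d, hd, rfl⟩

theorem upperSemicontinuous_Ustar (hU : Continuous U) :
    UpperSemicontinuous fun p : Θ × CL C => Ustar U p.1 p.2 := by
  rintro ⟨θ₀, D₀⟩ y hy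
  obtain ⟨y', hy', hy'y⟩ := exists_between hy
  have hsub : {θ₀} ×ˢ D₀.1 ⊆ {p | U p < y'} := by
    rintro ⟨θ, d⟩ ⟨rfl, hd⟩
    exact (le_Ustar hU hd).trans_lt hy'
  obtain ⟨N, W, hN, hW, hθN, hDW, htube⟩ := generalized_tube_lemma isCompact_singleton
    D₀.isCompact (isOpen_lt hU continuous_const) hsub
  filter_upwards [(hN.prod (CL.isOpen_setOf_subset hW)).mem_nhds ⟨hθN rfl, hDW⟩]
    with ⟨θ, D⟩ ⟨hθ, hD⟩
  exact (Ustar_le fun d hd => (htube ⟨hθ, hD hd⟩).le).trans_lt hy'y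

theorem lowerSemicontinuous_Ustar (hU : Continuous U) :
    LowerSemicontinuous fun p : Θ × CL C => Ustar U p.1 p.2 := by
  rintro ⟨θ₀, D₀⟩ y hy
  obtain ⟨_, ⟨d₀, hd₀, rfl⟩, hlt⟩ := exists_lt_of_lt_csSup (D₀.2.1.image _) hy
  obtain ⟨N, V, hN, hV, hθN, hdV, htube⟩ :=
    isOpen_prod_iff.mp (isOpen_lt continuous_const hU) θ₀ d₀ hlt
  filter_upwards [(hN.prod (CL.isOpen_setOf_inter_nonempty hV)).mem_nhds ⟨hθN, d₀, hd₀, hdV⟩]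
    with ⟨θ, D⟩ ⟨hθ, d, hdD, hdV⟩
  exact (htube (Set.mk_mem_prod hθ hdV)).trans_le (le_Ustar hU hdD)

end Ustar

theorem Ustar_continuous_general {Θ C : Type*}
    [TopologicalSpace C] [CompactSpace C]
    [TopologicalSpace Θ]
    (U : Θ × C → ℝ) (hU : Continuous U) :
    Continuous (fun p : Θ × CL C => Ustar U p.1 p.2) :=
  continuous_iff_lower_upperSemicontinuous.2
    ⟨lowerSemicontinuous_Ustar hU, upperSemicontinuous_Ustar hU⟩

/-- If `C` and `Θ` are compact Hausdorff and `U : Θ × C → ℝ` is jointly continuous,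
then `U*(θ, D) = sup_{d ∈ D} U(θ, d)` is jointly continuous on `Θ × CL(C)`, where
`CL(C)` carries the Fell topology. -/
theorem Ustar_continuous {Θ C : Type*}
    [TopologicalSpace C] [CompactSpace C] [T2Space C]
    [TopologicalSpace Θ] [CompactSpace Θ] [T2Space Θ]
    (U : Θ × C → ℝ) (hU : Continuous U) :
    Continuous (fun p : Θ × CL C => Ustar U p.1 p.2) :=
  Ustar_continuous_general U hU
end

section
/- Let (C, τ^C) and (Θ, τ^Θ) be compact Hausdorff spaces, U : Θ × C → ℝ jointly continuous, and V : Θ × C → ℝ jointly upper semicontinuous. Then the function V* : Θ × CL(C) → ℝ defined by V*(θ, D) := sup_{d ∈ Φ(θ, D)} V(θ, d), where Φ(θ, D) := argmax_{d ∈ D} U(θ, d), is jointly upper semicontinuous, where Θ × CL(C) carries the product of τ^Θ and the Fell topology τ_F. -/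
/-- The agent's argmax correspondence:
`Φ(θ, D) = {d ∈ D : U(θ, d) = sup_{d' ∈ D} U(θ, d')}`. -/
noncomputable def Phi {Θ C : Type*} [TopologicalSpace C]
    (U : Θ × C → ℝ) (θ : Θ) (D : CL C) : Set C :=
  {d ∈ D.1 | U (θ, d) = Ustar U θ D}

/-- The principal's indirect utility over menus:
`V*(θ, D) = sup_{d ∈ Φ(θ, D)} V(θ, d)`. -/
noncomputable def Vstar {Θ C : Type*} [TopologicalSpace C]
    (U V : Θ × C → ℝ) (θ : Θ) (D : CL C) : ℝ :=
  sSup ((fun d => V (θ, d)) '' Phi U θ D)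

open Set Filter Topology

def argmaxSet {α : Type*} (f : α → ℝ) (s : Set α) : Set α :=
  {a ∈ s | f a = sSup (f '' s)}

section Compact

variable {α : Type*} [TopologicalSpace α]

theorem IsCompact.argmaxSet_nonempty {f : α → ℝ} {s : Set α} (hs : IsCompact s)
    (hne : s.Nonempty) (hf : ContinuousOn f s) : (argmaxSet f s).Nonempty := by
  obtain ⟨a, ha, hmax⟩ := hs.exists_sSup_image_eq hne hf
  exact ⟨a, ha, hmax.symm⟩

theorem IsCompact.isCompact_argmaxSet {f : α → ℝ} {s : Set α} (hs : IsCompact s)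
    (hf : Continuous f) : IsCompact (argmaxSet f s) :=
  hs.inter_right (isClosed_singleton.preimage hf)

theorem IsCompact.sSup_lt_iff_of_upperSemicontinuousOn {f : α → ℝ} {K : Set α}
    (hK : IsCompact K) (hne : K.Nonempty) (hf : UpperSemicontinuousOn f K) (y : ℝ) :
    sSup (f '' K) < y ↔ ∀ x ∈ K, f x < y := by
  refine ⟨fun h x hx ↦ (le_csSup (hf.bddAbove_of_isCompact hK) (mem_image_of_mem f hx)).trans_lt h,
    fun h ↦ ?_⟩
  obtain ⟨a, ha, hmax⟩ := hf.exists_isMaxOn hne hK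
  refine (csSup_le (hne.image f) ?_).trans_lt (h a ha)
  rintro _ ⟨x, hx, rfl⟩
  exact hmax hx

theorem IsCompact.exists_lt_forall_lt {f : α → ℝ} {K : Set α} (hK : IsCompact K)
    (hf : ContinuousOn f K) {u : ℝ} (h : ∀ x ∈ K, f x < u) : ∃ c < u, ∀ x ∈ K, f x < c := by
  rcases K.eq_empty_or_nonempty with rfl | hne
  · exact ⟨u - 1, by linarith, by simp⟩
  obtain ⟨a, ha, hmax⟩ := hK.exists_isMaxOn hne hf
  obtain ⟨c, hac, hcu⟩ := exists_between (h a ha)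
  exact ⟨c, hcu, fun x hx ↦ (hmax hx).trans_lt hac⟩

end Compact

section Correspondence

variable {X C : Type*} [TopologicalSpace X] [TopologicalSpace C] {F : X → Set C}

theorem LowerHemicontinuous.lowerSemicontinuous_sSup_image {U : X × C → ℝ} (hU : Continuous U)
    (hF : LowerHemicontinuous F) (hFc : ∀ x, IsCompact (F x)) (hFne : ∀ x, (F x).Nonempty) :
    LowerSemicontinuous fun x ↦ sSup ((fun d ↦ U (x, d)) '' F x) := by
  intro x₀ c hc
  obtain ⟨_, ⟨d₀, hd₀, rfl⟩, hcd₀⟩ := exists_lt_of_lt_csSup ((hFne x₀).image _) hc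
  obtain ⟨N, O, hN, hO, hx₀N, hd₀O, hNO⟩ :=
    isOpen_prod_iff.1 (isOpen_lt continuous_const hU) x₀ d₀ hcd₀
  filter_upwards [hN.mem_nhds hx₀N,
    lowerHemicontinuousAt_iff.1 (hF x₀) O hO ⟨d₀, hd₀, hd₀O⟩] with x hxN ⟨d, hd, hdO⟩
  have hbdd := ((hFc x).image (hU.comp (Continuous.prodMk_right x))).bddAbove
  exact (hNO (mk_mem_prod hxN hdO)).trans_le (le_csSup hbdd (mem_image_of_mem _ hd))

/-- Berge's maximum theorem. -/
theorem upperHemicontinuous_argmaxSet {U : X × C → ℝ} (hU : Continuous U)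
    (hFu : UpperHemicontinuous F) (hFl : LowerHemicontinuous F) (hFc : ∀ x, IsCompact (F x))
    (hFne : ∀ x, (F x).Nonempty) :
    UpperHemicontinuous fun x ↦ argmaxSet (fun d ↦ U (x, d)) (F x) := by
  refine .of_forall_isOpen fun x₀ W hW hΦW ↦ ?_
  set m := fun x ↦ sSup ((fun d ↦ U (x, d)) '' F x)
  have hUx₀ : Continuous fun d ↦ U (x₀, d) := hU.comp (Continuous.prodMk_right x₀)
  have hK : IsCompact (F x₀ \ W) := (hFc x₀).diff hW
  -- off `W` the maximum `m x₀` is not attained, so it is missed by a uniform margin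
  obtain ⟨c, hcm, hKc⟩ : ∃ c < m x₀, ∀ d ∈ F x₀ \ W, U (x₀, d) < c := by
    refine hK.exists_lt_forall_lt hUx₀.continuousOn fun d hd ↦ lt_of_le_of_ne ?_ ?_
    · exact le_csSup ((hFc x₀).image hUx₀).bddAbove (mem_image_of_mem _ hd.1)
    · exact fun heq ↦ hd.2 (hΦW ⟨hd.1, heq⟩)
  obtain ⟨N, W', hN, hW', hx₀N, hKW', hNW'⟩ := generalized_tube_lemma isCompact_singleton hK
    (isOpen_lt hU continuous_const) (by
      rintro ⟨x, d⟩ ⟨rfl, hd⟩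
      exact hKc d hd)
  have hFW : F x₀ ⊆ W ∪ W' := fun d hd ↦ (em (d ∈ W)).imp id fun h ↦ hKW' ⟨hd, h⟩
  filter_upwards [hN.mem_nhds (hx₀N rfl), hFu.forall_isOpen x₀ _ (hW.union hW') hFW,
    (hFl.lowerSemicontinuous_sSup_image hU hFc hFne) x₀ c hcm] with x hxN hxW hcx
  rintro d ⟨hd, hdmax⟩
  refine (hxW hd).resolve_right fun hdW' ↦ ?_
  have hdc : U (x, d) < c := hNW' (mk_mem_prod hxN hdW')
  exact (hdc.trans hcx).ne hdmax

theorem UpperHemicontinuous.upperSemicontinuous_sSup_image {V : X × C → ℝ}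
    (hV : UpperSemicontinuous V) (hF : UpperHemicontinuous F) (hFc : ∀ x, IsCompact (F x))
    (hFne : ∀ x, (F x).Nonempty) :
    UpperSemicontinuous fun x ↦ sSup ((fun d ↦ V (x, d)) '' F x) := by
  have hVx : ∀ x, UpperSemicontinuousOn (fun d ↦ V (x, d)) (F x) := fun x ↦
    (hV.comp (Continuous.prodMk_right x)).upperSemicontinuousOn _
  intro x₀ y hy
  have hlt := ((hFc x₀).sSup_lt_iff_of_upperSemicontinuousOn (hFne x₀) (hVx x₀) y).1 hy
  obtain ⟨N, W, hN, hW, hx₀N, hFW, hNW⟩ := generalized_tube_lemma isCompact_singleton (hFc x₀)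
    (hV.isOpen_preimage y) (by
      rintro ⟨x, d⟩ ⟨rfl, hd⟩
      exact hlt d hd)
  filter_upwards [hN.mem_nhds (hx₀N rfl), hF.forall_isOpen x₀ W hW hFW] with x hxN hxW
  exact ((hFc x).sSup_lt_iff_of_upperSemicontinuousOn (hFne x) (hVx x) y).2
    fun d hd ↦ hNW (mk_mem_prod hxN (hxW hd))

end Correspondence

namespace CL

variable {C : Type*} [TopologicalSpace C]

theorem upperHemicontinuous_val : UpperHemicontinuous fun A : CL C ↦ A.1 := by
  refine .of_forall_isOpen fun A W hW hAW ↦ IsOpen.mem_nhds ?_ hAW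
  rcases W.eq_empty_or_nonempty with rfl | hWne
  · convert isOpen_empty
    exact eq_empty_of_forall_notMem fun B hB ↦ B.2.1.ne_empty (subset_empty_iff.1 hB)
  · exact TopologicalSpace.isOpen_generateFrom_of_mem (Or.inr ⟨W, hW, hWne, rfl⟩)

theorem lowerHemicontinuous_val : LowerHemicontinuous fun A : CL C ↦ A.1 := by
  refine fun A ↦ lowerHemicontinuousAt_iff.2 fun O hO hAO ↦ IsOpen.mem_nhds ?_ hAO
  exact TopologicalSpace.isOpen_generateFrom_of_mem
    (Or.inl ⟨O, hO, hAO.mono inter_subset_right, rfl⟩)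

end CL

theorem Vstar_upperSemicontinuous_general {Θ C : Type*}
    [TopologicalSpace C] [CompactSpace C]
    [TopologicalSpace Θ]
    (U V : Θ × C → ℝ) (hU : Continuous U) (hV : UpperSemicontinuous V) :
    UpperSemicontinuous (fun p : Θ × CL C => Vstar U V p.1 p.2) := by
  let F : Θ × CL C → Set C := fun p ↦ p.2.1
  let U' : (Θ × CL C) × C → ℝ := fun q ↦ U (q.1.1, q.2)
  have hU' : Continuous U' := hU.comp (continuous_fst.fst.prodMk continuous_snd)
  have hFc : ∀ p, IsCompact (F p) := fun p ↦ p.2.2.2.isCompact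
  have hFne : ∀ p, (F p).Nonempty := fun p ↦ p.2.2.1
  -- `Phi U θ D` unfolds to `argmaxSet (fun d ↦ U (θ, d)) D.1`
  have hΦ : UpperHemicontinuous fun p : Θ × CL C ↦ Phi U p.1 p.2 :=
    upperHemicontinuous_argmaxSet hU' (CL.upperHemicontinuous_val.comp continuous_snd)
      (CL.lowerHemicontinuous_val.comp continuous_snd) hFc hFne
  have hΦc : ∀ p : Θ × CL C, IsCompact (Phi U p.1 p.2) := fun p ↦
    (hFc p).isCompact_argmaxSet (hU'.comp (.prodMk_right p))
  have hΦne : ∀ p : Θ × CL C, (Phi U p.1 p.2).Nonempty := fun p ↦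
    (hFc p).argmaxSet_nonempty (hFne p) (hU'.comp (.prodMk_right p)).continuousOn
  exact hΦ.upperSemicontinuous_sSup_image (V := fun q ↦ V (q.1.1, q.2))
    (hV.comp (continuous_fst.fst.prodMk continuous_snd)) hΦc hΦne

/-- If `C` and `Θ` are compact Hausdorff, `U : Θ × C → ℝ` is jointly continuous and
`V : Θ × C → ℝ` is jointly upper semicontinuous, then
`V*(θ, D) = sup_{d ∈ Φ(θ, D)} V(θ, d)` is jointly upper semicontinuous on
`Θ × CL(C)`, where `CL(C)` carries the Fell topology. -/
theorem Vstar_upperSemicontinuous {Θ C : Type*}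
    [TopologicalSpace C] [CompactSpace C] [T2Space C]
    [TopologicalSpace Θ] [CompactSpace Θ] [T2Space Θ]
    (U V : Θ × C → ℝ) (hU : Continuous U) (hV : UpperSemicontinuous V) :
    UpperSemicontinuous (fun p : Θ × CL C => Vstar U V p.1 p.2) :=
  Vstar_upperSemicontinuous_general U V hU hV
end

section
/- Let X and Y be compact Hausdorff spaces, λ a regular Borel probability measure on X, and g : X × Y → ℝ jointly upper semicontinuous such that for each y ∈ Y the function x ↦ g(x, y) is λ-integrable. Then the function y ↦ ∫_X g(x, y) dλ(x) is upper semicontinuous on Y. -/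
/-!
By the Vitali–Carathéodory theorem, above `g(·, y₀)` there is a lower semicontinuous `φ` whose
integral exceeds `∫ g(·, y₀)` by less than a prescribed `ε`. Upper semicontinuity of `g` and
lower semicontinuity of `φ` make `g(x, y) < φ(x)` an open condition on `(x, y)`; as it holds on
the compact fibre `X × {y₀}`, the tube lemma gives it on `X × V` for a neighbourhood `V` of `y₀`,
and integrating over `x` bounds `∫ g(·, y)` by `∫ g(·, y₀) + ε` for `y ∈ V`.
-/

open MeasureTheory Filter Topology

theorem UpperSemicontinuous.eventually_forall_lt_of_lowerSemicontinuous
    {X Y β : Type*} [TopologicalSpace X] [CompactSpace X] [TopologicalSpace Y]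
    [LinearOrder β] [DenselyOrdered β] {g : X × Y → β} {φ : X → β}
    (hg : UpperSemicontinuous g) (hφ : LowerSemicontinuous φ) {y₀ : Y}
    (hlt : ∀ x, g (x, y₀) < φ x) :
    ∀ᶠ y in 𝓝 y₀, ∀ x, g (x, y) < φ x := by
  have hnear : ∀ x, ∀ᶠ p : Y × X in 𝓝 (y₀, x), g (p.2, p.1) < φ p.2 := by
    intro x
    obtain ⟨r, hgr, hrφ⟩ := exists_between (hlt x)
    have hg' : ∀ᶠ p : Y × X in 𝓝 (y₀, x), g (p.2, p.1) < r :=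
      (continuous_swap.continuousAt (x := (y₀, x))).eventually (hg (x, y₀) r hgr)
    have hφ' : ∀ᶠ p : Y × X in 𝓝 (y₀, x), r < φ p.2 :=
      (continuous_snd.continuousAt (x := (y₀, x))).eventually (hφ x r hrφ)
    filter_upwards [hg', hφ'] with p hgp hφp using hgp.trans hφp
  simpa using isCompact_univ.eventually_forall_of_forall_eventually fun x _ => hnear x

theorem integral_le_integral_toReal_of_coe_lt {X : Type*} [MeasurableSpace X] {μ : Measure X}
    {f : X → ℝ} {φ : X → EReal} (hf : Integrable f μ)
    (hφ : Integrable (fun x => (φ x).toReal) μ) (hφ_top : ∀ᵐ x ∂μ, φ x < ⊤)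
    (hlt : ∀ x, (f x : EReal) < φ x) :
    ∫ x, f x ∂μ ≤ ∫ x, (φ x).toReal ∂μ := by
  refine integral_mono_ae hf hφ ?_
  filter_upwards [hφ_top] with x hx
  simpa using EReal.toReal_le_toReal (hlt x).le (EReal.coe_ne_bot _) hx.ne

theorem upperSemicontinuous_integral_general {X Y : Type*}
    [TopologicalSpace X] [CompactSpace X] [T2Space X]
    [MeasurableSpace X] [BorelSpace X]
    [TopologicalSpace Y]
    (lam : Measure X) [IsProbabilityMeasure lam] [lam.InnerRegular]
    (g : X × Y → ℝ) (hg : UpperSemicontinuous g)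
    (hint : ∀ y : Y, Integrable (fun x => g (x, y)) lam) :
    UpperSemicontinuous fun y : Y => ∫ x, g (x, y) ∂lam := by
  intro y₀ c hc
  obtain ⟨φ, hφ_gt, hφ_lsc, hφ_int, hφ_top, hφ_close⟩ :=
    exists_lt_lowerSemicontinuous_integral_lt (fun x => g (x, y₀)) (hint y₀) (sub_pos.2 hc)
  have hg_ereal : UpperSemicontinuous fun p => (g p : EReal) :=
    continuous_coe_real_ereal.comp_upperSemicontinuous hg fun _ _ => EReal.coe_le_coe_iff.2
  filter_upwards [hg_ereal.eventually_forall_lt_of_lowerSemicontinuous hφ_lsc hφ_gt]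
    with y hy
  calc ∫ x, g (x, y) ∂lam ≤ ∫ x, (φ x).toReal ∂lam :=
        integral_le_integral_toReal_of_coe_lt (hint y) hφ_int hφ_top hy
    _ < ∫ x, g (x, y₀) ∂lam + (c - ∫ x, g (x, y₀) ∂lam) := hφ_close
    _ = c := add_sub_cancel _ _

/-- Upper semicontinuity of an integral functional (Lemma 7 of the paper): if `X` and
`Y` are compact Hausdorff spaces, `λ` is a regular Borel probability measure on `X` and
`g : X × Y → ℝ` is jointly upper semicontinuous with `g(·, y)` `λ`-integrable for each
`y`, then `y ↦ ∫ g(x, y) dλ(x)` is upper semicontinuous on `Y`. -/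
theorem upperSemicontinuous_integral {X Y : Type*}
    [TopologicalSpace X] [CompactSpace X] [T2Space X]
    [MeasurableSpace X] [BorelSpace X]
    [TopologicalSpace Y] [CompactSpace Y] [T2Space Y]
    (lam : Measure X) [IsProbabilityMeasure lam] [lam.InnerRegular] [lam.OuterRegular]
    (g : X × Y → ℝ) (hg : UpperSemicontinuous g)
    (hint : ∀ y : Y, Integrable (fun x => g (x, y)) lam) :
    UpperSemicontinuous fun y : Y => ∫ x, g (x, y) ∂lam :=
  upperSemicontinuous_integral_general lam g hg hint
end

section
/- Let X be a Hausdorff space, Y a compact Hausdorff space, λ a regular Borel probability measure on X, and g : X × Y → ℝ a jointly upper semicontinuous bounded function. Then the function y ↦ ∫_X g(x, y) dλ(x) is well-defined and upper semicontinuous on Y. -/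
/-!
The superlevel sets `{g ≥ t}` are closed in `X × Y`, and for closed `F ⊆ X × Y` the section
measure `y ↦ λ {x | (x, y) ∈ F}` is upper semicontinuous: a compact `K` carrying almost all the
mass of the open complement of the section at `y₀` stays, by the tube lemma, in the complement of
the section at every `y` near `y₀`. Cutting the range `[-M, M]` of `g` into levels of width `ε`
expresses `∫ g(x, y) dλ(x)`, up to an error `ε` uniform in `y`, as a finite sum of such section
measures; a uniform limit of upper semicontinuous functions is upper semicontinuous.
-/

open MeasureTheory Finset

theorem upperSemicontinuous_of_forall_pos_exists_le_le_add {Y : Type*} [TopologicalSpace Y]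
    {f : Y → ℝ}
    (h : ∀ ε > 0, ∃ A : Y → ℝ, UpperSemicontinuous A ∧ ∀ y, A y ≤ f y ∧ f y ≤ A y + ε) :
    UpperSemicontinuous f := by
  intro y₀ c hc
  obtain ⟨A, hA, hAf⟩ := h ((c - f y₀) / 2) (by linarith)
  filter_upwards [hA y₀ (c - (c - f y₀) / 2) (by linarith [(hAf y₀).1])] with y hy
  linarith [(hAf y).2]

theorem IsClosed.upperSemicontinuous_measureReal_prodMk_right {X Y : Type*}
    [TopologicalSpace X] [MeasurableSpace X] [OpensMeasurableSpace X] [TopologicalSpace Y]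
    (μ : Measure X) [IsFiniteMeasure μ] [μ.InnerRegularCompactLTTop] {F : Set (X × Y)}
    (hF : IsClosed F) :
    UpperSemicontinuous fun y => μ.real ((fun x => (x, y)) ⁻¹' F) := by
  intro y₀ c hc
  have hsection : ∀ y, MeasurableSet ((fun x => (x, y)) ⁻¹' F) := fun y =>
    (hF.preimage (Continuous.prodMk_left y)).measurableSet
  obtain ⟨K, hKF, hK, hμK⟩ := (hsection y₀).compl.exists_isCompact_lt_add (measure_ne_top μ _)
    (ENNReal.ofReal_pos.2 (sub_pos.2 hc)).ne'
  have hμK_real : μ.real ((fun x => (x, y₀)) ⁻¹' F)ᶜ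
      < μ.real K + (c - μ.real ((fun x => (x, y₀)) ⁻¹' F)) := by
    have := (ENNReal.toReal_lt_toReal (measure_ne_top μ _) (by simp [measure_ne_top μ])).2 hμK
    rwa [ENNReal.toReal_add (measure_ne_top μ _) ENNReal.ofReal_ne_top,
      ENNReal.toReal_ofReal (sub_pos.2 hc).le] at this
  obtain ⟨U, V, -, hV, hKU, hyV, hUV⟩ := generalized_tube_lemma hK (isCompact_singleton (x := y₀))
    hF.isOpen_compl (by rintro ⟨x, y⟩ ⟨hx, rfl⟩; exact hKF hx)
  filter_upwards [hV.mem_nhds (hyV rfl)] with y hy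
  have hμK_le : μ.real K ≤ μ.real ((fun x => (x, y)) ⁻¹' F)ᶜ :=
    measureReal_mono fun x hx => hUV ⟨hKU hx, hy⟩
  rw [measureReal_compl (hsection y)] at hμK_le
  rw [measureReal_compl (hsection y₀)] at hμK_real
  linarith

theorem add_mul_card_filter_range_le_and_lt_add {a t ε : ℝ} {n : ℕ} (hε : 0 < ε) (hat : a ≤ t)
    (hta : t ≤ a + n * ε) :
    a + ε * #{k ∈ range n | a + ((k : ℕ) + 1 : ℝ) * ε ≤ t} ≤ t ∧
      t < a + ε * #{k ∈ range n | a + ((k : ℕ) + 1 : ℝ) * ε ≤ t} + ε := by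
  have hq : 0 ≤ (t - a) / ε := div_nonneg (sub_nonneg.2 hat) hε.le
  set N := ⌊(t - a) / ε⌋₊
  have hN : {k ∈ range n | a + ((k : ℕ) + 1 : ℝ) * ε ≤ t} = range N := by
    have hNn : N ≤ n := Nat.floor_le_of_le ((div_le_iff₀ hε).2 (by linarith))
    ext k
    have hk : a + ((k : ℕ) + 1 : ℝ) * ε ≤ t ↔ k < N := by
      rw [← Nat.add_one_le_iff, Nat.le_floor_iff hq, le_div_iff₀ hε]
      push_cast
      constructor <;> intro h <;> linarith
    rw [mem_filter, mem_range, mem_range, hk]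
    omega
  have hN_le : N * ε ≤ t - a := (le_div_iff₀ hε).1 (Nat.floor_le hq)
  have hN_lt : t - a < (N + 1) * ε := (div_lt_iff₀ hε).1 (Nat.lt_floor_add_one _)
  rw [hN, card_range]
  constructor <;> linarith

theorem integral_mem_Icc_sum_measureReal_superlevel {X : Type*} [MeasurableSpace X]
    (μ : Measure X) [IsFiniteMeasure μ] {h : X → ℝ} (hh : Measurable h) {a ε : ℝ} {n : ℕ}
    (hε : 0 < ε) (ha : ∀ x, a ≤ h x) (hn : ∀ x, h x ≤ a + n * ε) :
    ∫ x, h x ∂μ ∈ Set.Icc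
      (a * μ.real Set.univ + ε * ∑ k ∈ range n, μ.real {x | a + ((k : ℕ) + 1 : ℝ) * ε ≤ h x})
      ((a + ε) * μ.real Set.univ +
        ε * ∑ k ∈ range n, μ.real {x | a + ((k : ℕ) + 1 : ℝ) * ε ≤ h x}) := by
  set L : ℕ → Set X := fun k => {x | a + ((k : ℕ) + 1 : ℝ) * ε ≤ h x}
  have hL : ∀ k, MeasurableSet (L k) := fun k => measurableSet_le measurable_const hh
  have hL_int : ∀ k ∈ range n, Integrable ((L k).indicator (1 : X → ℝ)) μ := fun k _ =>
    (integrable_const (1 : ℝ)).indicator (hL k)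
  have hsum_int := (integrable_finsetSum _ hL_int).const_mul ε
  set φ : X → ℝ := fun x => a + ε * ∑ k ∈ range n, (L k).indicator 1 x
  have hφ : ∀ x, φ x = a + ε * #{k ∈ range n | a + ((k : ℕ) + 1 : ℝ) * ε ≤ h x} := by
    simp [φ, L, Set.indicator_apply]
  have hφ_int : Integrable φ μ := (integrable_const a).add hsum_int
  have hφ_integral :
      ∫ x, φ x ∂μ = a * μ.real Set.univ + ε * ∑ k ∈ range n, μ.real (L k) := by
    rw [integral_add (integrable_const a) hsum_int, integral_const_mul,
      integral_finsetSum _ hL_int]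
    simp [integral_indicator_one (hL _), mul_comm]
  have hh_int : Integrable h μ := by
    refine .of_bound hh.aestronglyMeasurable (|a| + |a + n * ε|) (.of_forall fun x => ?_)
    rw [Real.norm_eq_abs, abs_le]
    constructor <;> linarith [ha x, hn x, neg_abs_le a, le_abs_self (a + n * ε), abs_nonneg a,
      abs_nonneg (a + n * ε)]
  constructor
  · rw [← hφ_integral]
    exact integral_mono hφ_int hh_int fun x =>
      (hφ x).trans_le (add_mul_card_filter_range_le_and_lt_add hε (ha x) (hn x)).1
  · calc ∫ x, h x ∂μ ≤ ∫ x, φ x + ε ∂μ :=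
          integral_mono hh_int (hφ_int.add (integrable_const ε)) fun x => by
            rw [hφ]; exact (add_mul_card_filter_range_le_and_lt_add hε (ha x) (hn x)).2.le
      _ = _ := by
        rw [integral_add hφ_int (integrable_const ε), hφ_integral, integral_const, smul_eq_mul]
        ring

theorem upperSemicontinuous_integral_of_bounded_general {X Y : Type*}
    [TopologicalSpace X]
    [MeasurableSpace X] [BorelSpace X]
    [TopologicalSpace Y]
    (lam : Measure X) [IsProbabilityMeasure lam] [lam.InnerRegular]
    (g : X × Y → ℝ) (hg : UpperSemicontinuous g)
    (hbdd : ∃ M : ℝ, ∀ p : X × Y, |g p| ≤ M) :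
    (∀ y : Y, Integrable (fun x => g (x, y)) lam) ∧
      UpperSemicontinuous fun y : Y => ∫ x, g (x, y) ∂lam := by
  obtain ⟨M, hM⟩ := hbdd
  have hslice : ∀ y, Measurable fun x => g (x, y) := fun y =>
    (hg.comp (Continuous.prodMk_left y)).measurable
  refine ⟨fun y => .of_bound (hslice y).aestronglyMeasurable M (.of_forall fun x => hM _),
    upperSemicontinuous_of_forall_pos_exists_le_le_add fun ε hε => ?_⟩
  obtain ⟨n, hn⟩ := exists_nat_ge (2 * M / ε)
  have hlevel : ∀ k : ℕ, UpperSemicontinuous fun y =>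
      lam.real ((fun x => (x, y)) ⁻¹' (g ⁻¹' Set.Ici (-M + (k + 1) * ε))) := fun k =>
    (hg.isClosed_preimage _).upperSemicontinuous_measureReal_prodMk_right lam
  refine ⟨fun y => -M + ε * ∑ k ∈ range n,
      lam.real ((fun x => (x, y)) ⁻¹' (g ⁻¹' Set.Ici (-M + (k + 1) * ε))), ?_, fun y => ?_⟩
  · exact (continuous_const.add (continuous_const_mul ε)).comp_upperSemicontinuous
      (upperSemicontinuous_sum fun k _ => hlevel k) fun s t hst => by dsimp; gcongr
  have hIcc := integral_mem_Icc_sum_measureReal_superlevel lam (hslice y) hε (a := -M) (n := n)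
    (fun x => neg_le_of_abs_le (hM _))
    (fun x => by linarith [le_of_abs_le (hM (x, y)), (div_le_iff₀ hε).1 hn])
  simp only [probReal_univ, mul_one] at hIcc
  exact ⟨hIcc.1, hIcc.2.trans_eq (add_right_comm _ _ _)⟩

/-- Upper semicontinuity of an integral functional with non-compact first factor
(Corollary 8 of the paper): if `X` is Hausdorff, `Y` is compact Hausdorff, `λ` is a
regular Borel probability measure on `X` and `g : X × Y → ℝ` is jointly upper
semicontinuous and bounded, then `y ↦ ∫ g(x, y) dλ(x)` is well-defined (each `g(·, y)`
is `λ`-integrable) and upper semicontinuous on `Y`. -/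
theorem upperSemicontinuous_integral_of_bounded {X Y : Type*}
    [TopologicalSpace X] [T2Space X]
    [MeasurableSpace X] [BorelSpace X]
    [TopologicalSpace Y] [CompactSpace Y] [T2Space Y]
    (lam : Measure X) [IsProbabilityMeasure lam] [lam.InnerRegular] [lam.OuterRegular]
    (g : X × Y → ℝ) (hg : UpperSemicontinuous g)
    (hbdd : ∃ M : ℝ, ∀ p : X × Y, |g p| ≤ M) :
    (∀ y : Y, Integrable (fun x => g (x, y)) lam) ∧
      UpperSemicontinuous fun y : Y => ∫ x, g (x, y) ∂lam :=
  upperSemicontinuous_integral_of_bounded_general lam g hg hbdd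
end

section
/- Let (Ω, F, Q) be a probability space, 𝒳 ⊆ L⁰(Q) convex, closed under convergence in Q-probability, and such that for every λ ∈ ℝ the set {x ∈ 𝒳 : x ≥ λ a.s.} is bounded in Q-probability, and let e_a ∈ L^∞(Q). Then the set 𝒳(e_a) := {x ∈ L⁰(Q) : 0 ≤ x ≤ e_a + x̄ a.s. for some x̄ ∈ 𝒳} is convex, solid (if x ∈ 𝒳(e_a) and 0 ≤ y ≤ x a.s. then y ∈ 𝒳(e_a)), and closed under convergence in Q-probability: if x_n ∈ 𝒳(e_a) and x_n → x in Q-probability, then x ∈ 𝒳(e_a). -/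
open MeasureTheory Filter

/-- A set `A` of random variables is bounded in `Q`-probability if
`lim_{R → ∞} sup_{x ∈ A} Q(|x| ≥ R) = 0`. -/
def BddInProb {Ω : Type*} [MeasurableSpace Ω] (Q : Measure Ω)
    (A : Set (Ω → ℝ)) : Prop :=
  Tendsto (fun R : ℝ => ⨆ x ∈ A, Q {ω | R ≤ |x ω|}) atTop (nhds 0)

/-- The set `𝒳(e) = {x ∈ L⁰(Q) : 0 ≤ x ≤ e + x̄ a.s. for some x̄ ∈ 𝒳}` of feasible
risk transfers. -/
def XSet {Ω : Type*} [MeasurableSpace Ω] (Q : Measure Ω)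
    (𝒳 : Set (Ω → ℝ)) (e : Ω → ℝ) : Set (Ω → ℝ) :=
  {x | AEMeasurable x Q ∧ ∃ xb ∈ 𝒳, ∀ᵐ ω ∂Q, 0 ≤ x ω ∧ x ω ≤ e ω + xb ω}

/-!
Only closedness needs an argument. If `f n → x` in probability with `0 ≤ f n ≤ e_a + x̄ n`,
pass to an a.e. convergent subsequence; the `x̄ n` are then bounded below by `-‖e_a‖∞`. Taking
approximate minimizers of `h ↦ ∫ exp (-h) ^ 2` over the convex hulls of the tails of `(x̄ n)`
gives forward convex combinations whose `exp (-·)` form a Cauchy sequence in `L²`, by the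
parallelogram law. Along a subsequence they converge a.e., and boundedness in probability rules
out the limit `+∞` on a set of positive measure. The a.e. limit `x̄` belongs to `𝒳` by
closedness and dominates `liminf (f n - e_a) = x - e_a`.
-/

open Set Topology

theorem exists_forall_le_add_of_bddBelow {α : Type*} {s : Set α} {f : α → ℝ} (hs : s.Nonempty)
    (hf : BddBelow (f '' s)) {ε : ℝ} (hε : 0 < ε) : ∃ x ∈ s, ∀ a ∈ s, f x ≤ f a + ε := by
  obtain ⟨_, ⟨x, hx, rfl⟩, hlt⟩ :=
    exists_lt_of_csInf_lt (hs.image f) (lt_add_of_pos_right (sInf (f '' s)) hε)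
  exact ⟨x, hx, fun a ha => hlt.le.trans (by gcongr; exact csInf_le hf ⟨a, ha, rfl⟩)⟩

theorem cauchySeq_of_near_minimizers {α E : Type*} [PseudoMetricSpace E] (J : α → ℝ)
    (S : ℕ → Set α) (hS : Antitone S) (hJ_below : BddBelow (J '' S 0))
    (hJ_above : BddAbove (J '' S 0)) (ε : ℕ → ℝ) (hε : Antitone ε)
    (hε_lim : Tendsto ε atTop (𝓝 0)) (x : ℕ → α) (y : ℕ → E) (hxS : ∀ n, x n ∈ S n)
    (hx_min : ∀ n, ∀ a ∈ S n, J (x n) ≤ J a + ε n)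
    (hy : ∀ n m, n ≤ m → ∃ a ∈ S n, dist (y n) (y m) ^ 2 ≤ J (x n) + J (x m) - 2 * J a) :
    CauchySeq y := by
  set s : ℕ → ℝ := fun n => sInf (J '' S n)
  have hbelow : ∀ n, BddBelow (J '' S n) := fun n => hJ_below.mono (image_mono (hS n.zero_le))
  have hs_le : ∀ n, ∀ a ∈ S n, s n ≤ J a := fun n a ha => csInf_le (hbelow n) ⟨a, ha, rfl⟩
  have hs_mono : Monotone s := fun n m hnm =>
    csInf_le_csInf (hbelow n) ⟨J (x m), x m, hxS m, rfl⟩ (image_mono (hS hnm))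
  have hs_bdd : BddAbove (range s) := by
    obtain ⟨M, hM⟩ := hJ_above
    refine ⟨M, ?_⟩
    rintro _ ⟨n, rfl⟩
    exact (hs_le n _ (hxS n)).trans (hM ⟨x n, hS n.zero_le (hxS n), rfl⟩)
  set L := ⨆ n, s n
  have hx_near : ∀ n, J (x n) ≤ s n + ε n := fun n => by
    have : J (x n) - ε n ≤ s n :=
      le_csInf ⟨J (x n), x n, hxS n, rfl⟩ (by rintro _ ⟨a, ha, rfl⟩; linarith [hx_min n a ha])
    linarith
  have hdist : ∀ N n m, N ≤ n → n ≤ m → dist (y n) (y m) ≤ √(L - s N + 2 * ε N) := by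
    intro N n m hNn hnm
    obtain ⟨a, ha, hya⟩ := hy n m hnm
    refine Real.le_sqrt_of_sq_le ?_
    calc dist (y n) (y m) ^ 2 ≤ J (x n) + J (x m) - 2 * s n := by linarith [hs_le n a ha]
      _ ≤ s m - s n + ε n + ε m := by linarith [hx_near n, hx_near m]
      _ ≤ L - s N + 2 * ε N := by
        linarith [hs_mono hNn, hε hNn, hε (hNn.trans hnm), le_ciSup hs_bdd m]
  refine cauchySeq_of_le_tendsto_0 (fun N => √(L - s N + 2 * ε N)) (fun n m N hn hm => ?_) ?_
  · rcases le_total n m with h | h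
    · exact hdist N n m hn h
    · rw [dist_comm]; exact hdist N m n hm h
  · have hs_lim : Tendsto (fun N => L - s N) atTop (𝓝 0) := by
      simpa [L] using (tendsto_atTop_ciSup hs_mono hs_bdd).const_sub L
    simpa using ((hs_lim.add (hε_lim.const_mul 2)).sqrt)

theorem tendsto_neg_log_of_tendsto_exp_neg {ι : Type*} {l : Filter ι} {t : ι → ℝ}
    {z : ℝ} (h : Tendsto (fun i => Real.exp (-t i)) l (𝓝 z)) (ht : ¬Tendsto t l atTop) :
    Tendsto t l (𝓝 (-Real.log z)) := by
  have hz : z ≠ 0 := by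
    rintro rfl
    exact ht (tendsto_neg_atBot_iff.1 (Real.tendsto_exp_comp_nhds_zero.1 h))
  simpa using (h.log hz).neg

theorem le_of_tendsto_of_iInf_le {y : ℕ → ℝ} {x c : ℝ} (hy : Tendsto y atTop (𝓝 x))
    (hc : ∀ n, (⨅ j, y (n + j)) ≤ c) : x ≤ c := by
  refine le_of_forall_pos_le_add fun δ hδ => ?_
  obtain ⟨N, hN⟩ := Metric.tendsto_atTop.1 hy δ hδ
  have : x - δ ≤ ⨅ j, y (N + j) := le_ciInf fun j => by
    have := hN (N + j) (N.le_add_right j)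
    rw [Real.dist_eq] at this
    linarith [abs_lt.1 this]
  linarith [hc N]

namespace BddInProb

variable {Ω : Type*} [MeasurableSpace Ω] {Q : Measure Ω} {A B : Set (Ω → ℝ)}

theorem mono (hB : BddInProb Q B) (hAB : A ⊆ B) : BddInProb Q A :=
  tendsto_of_tendsto_of_tendsto_of_le_of_le tendsto_const_nhds hB (fun _ => bot_le)
    fun _ => biSup_mono hAB

theorem ae_not_tendsto_atTop (hA : BddInProb Q A) {g : ℕ → Ω → ℝ} (hg : ∀ k, g k ∈ A) :
    ∀ᵐ ω ∂Q, ¬Tendsto (fun k => g k ω) atTop atTop := by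
  set E := {ω | Tendsto (fun k => g k ω) atTop atTop}
  have hE : ∀ R : ℝ, Q E ≤ ⨆ x ∈ A, Q {ω | R ≤ |x ω|} := by
    intro R
    set T : ℕ → Set Ω := fun K => ⋂ k ≥ K, {ω | R ≤ |g k ω|}
    have hT : Monotone T := fun K K' hK => biInter_mono (fun k hk => hK.trans hk) fun _ _ => le_rfl
    have hET : E ⊆ ⋃ K, T K := fun ω hω => by
      obtain ⟨K, hK⟩ := eventually_atTop.1 (hω.eventually_ge_atTop R)
      exact mem_iUnion.2 ⟨K, mem_iInter₂.2 fun k hk => (hK k hk).trans (le_abs_self _)⟩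
    calc Q E ≤ Q (⋃ K, T K) := measure_mono hET
      _ = ⨆ K, Q (T K) := hT.measure_iUnion
      _ ≤ ⨆ x ∈ A, Q {ω | R ≤ |x ω|} := iSup_le fun K =>
          (measure_mono (biInter_subset_of_mem le_rfl)).trans
            (le_biSup (fun x : Ω → ℝ => Q {ω | R ≤ |x ω|}) (hg K))
  exact measure_eq_zero_iff_ae_notMem.1 (le_antisymm (ge_of_tendsto' hA hE) bot_le)

end BddInProb

section ConvexCombinations

variable {Ω : Type*} [MeasurableSpace Ω] {μ : Measure Ω}

theorem convex_setOf_ae_le (ψ : Ω → ℝ) : Convex ℝ {h : Ω → ℝ | ∀ᵐ ω ∂μ, ψ ω ≤ h ω} := by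
  intro h₁ hh₁ h₂ hh₂ a c ha hc hac
  show ∀ᵐ ω ∂μ, _
  filter_upwards [hh₁, hh₂] with ω h1 h2
  simp only [Pi.add_apply, Pi.smul_apply, smul_eq_mul]
  have hψ : ψ ω = a * ψ ω + c * ψ ω := by rw [← add_mul, hac, one_mul]
  linarith [mul_le_mul_of_nonneg_left h1 ha, mul_le_mul_of_nonneg_left h2 hc]

theorem convex_setOf_aemeasurable : Convex ℝ {h : Ω → ℝ | AEMeasurable h μ} :=
  fun _ h₁ _ h₂ a c _ _ _ => (h₁.const_smul a).add (h₂.const_smul c)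

theorem dist_toLp_sq_eq_integral {u v : Ω → ℝ} (hu : MemLp u 2 μ) (hv : MemLp v 2 μ) :
    dist (hu.toLp u) (hv.toLp v) ^ 2 = ∫ ω, (u ω - v ω) ^ 2 ∂μ := by
  rw [dist_eq_norm, ← hu.toLp_sub hv, ← real_inner_self_eq_norm_sq, L2.inner_def]
  refine integral_congr_ae ((hu.sub hv).coeFn_toLp.mono fun ω h => ?_)
  simp [h, sq]

theorem memLp_exp_neg_of_ae_ge [IsFiniteMeasure μ] {h : Ω → ℝ} {C : ℝ} (hh : AEMeasurable h μ)
    (hC : ∀ᵐ ω ∂μ, -C ≤ h ω) (p : ENNReal) : MemLp (fun ω => Real.exp (-h ω)) p μ :=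
  MemLp.of_bound (Real.measurable_exp.comp_aemeasurable hh.neg).aestronglyMeasurable
    (Real.exp C) (hC.mono fun ω hω => by
      rw [Real.norm_eq_abs, Real.abs_exp, Real.exp_le_exp]; linarith)

theorem dist_toLp_exp_neg_sq {h₁ h₂ : Ω → ℝ} (hu₁ : MemLp (fun ω => Real.exp (-h₁ ω)) 2 μ)
    (hu₂ : MemLp (fun ω => Real.exp (-h₂ ω)) 2 μ) :
    dist (hu₁.toLp _) (hu₂.toLp _) ^ 2 = ∫ ω, Real.exp (-h₁ ω) ^ 2 ∂μ +
      ∫ ω, Real.exp (-h₂ ω) ^ 2 ∂μ -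
      2 * ∫ ω, Real.exp (-((1 / 2 : ℝ) • h₁ + (1 / 2 : ℝ) • h₂) ω) ^ 2 ∂μ := by
  have hmid : ∀ ω, Real.exp (-((1 / 2 : ℝ) • h₁ + (1 / 2 : ℝ) • h₂) ω) ^ 2 =
      Real.exp (-h₁ ω) * Real.exp (-h₂ ω) := fun ω => by
    rw [sq, ← Real.exp_add, ← Real.exp_add]
    simp only [Pi.add_apply, Pi.smul_apply, smul_eq_mul]
    ring_nf
  have hprod : Integrable (fun ω => Real.exp (-h₁ ω) * Real.exp (-h₂ ω)) μ :=
    hu₁.integrable_mul hu₂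
  simp only [hmid]
  rw [dist_toLp_sq_eq_integral, ← integral_const_mul, ← integral_add hu₁.integrable_sq
    hu₂.integrable_sq, ← integral_sub (hu₁.integrable_sq.fun_add hu₂.integrable_sq)
    (hprod.const_mul 2)]
  exact integral_congr_ae (Eventually.of_forall fun ω => by ring)

theorem exists_subseq_tendsto_ae_of_cauchySeq_toLp_exp_neg {A : Set (Ω → ℝ)} {x : ℕ → Ω → ℝ}
    (hx : ∀ n, MemLp (fun ω => Real.exp (-x n ω)) 2 μ)
    (hcauchy : CauchySeq fun n => (hx n).toLp _) (hA : BddInProb μ A) (hxA : ∀ n, x n ∈ A) :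
    ∃ κ : ℕ → ℕ, StrictMono κ ∧ ∃ g : Ω → ℝ,
      ∀ᵐ ω ∂μ, Tendsto (fun k => x (κ k) ω) atTop (𝓝 (g ω)) := by
  obtain ⟨Y, hY⟩ := cauchySeq_tendsto_of_complete hcauchy
  obtain ⟨κ, hκ, hκY⟩ := ((tendstoInMeasure_of_tendsto_Lp hY).congr_left
    fun n => (hx n).coeFn_toLp).exists_seq_tendsto_ae
  refine ⟨κ, hκ, fun ω => -Real.log (Y ω), ?_⟩
  filter_upwards [hκY, hA.ae_not_tendsto_atTop fun k => hxA (κ k)] with ω hω hω'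
  exact tendsto_neg_log_of_tendsto_exp_neg hω hω'

theorem exists_tendsto_ae_of_mem_convexHull_tail [IsProbabilityMeasure μ] (b : ℕ → Ω → ℝ)
    (C : ℝ) (hb_meas : ∀ k, AEMeasurable (b k) μ) (hb_ge : ∀ k, ∀ᵐ ω ∂μ, -C ≤ b k ω)
    (hbdd : BddInProb μ (convexHull ℝ (range b))) :
    ∃ (φ : ℕ → Ω → ℝ) (g : Ω → ℝ), (∀ n, φ n ∈ convexHull ℝ (b '' Ici n)) ∧
      ∀ᵐ ω ∂μ, Tendsto (fun n => φ n ω) atTop (𝓝 (g ω)) := by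
  set S : ℕ → Set (Ω → ℝ) := fun n => convexHull ℝ (b '' Ici n)
  have hS : Antitone S := fun n m h => convexHull_mono (image_mono (Ici_subset_Ici.2 h))
  have hS_ne : ∀ n, (S n).Nonempty := fun n => ⟨b n, subset_convexHull ℝ _ ⟨n, self_mem_Ici, rfl⟩⟩
  have hS_ge : ∀ n, ∀ h ∈ S n, AEMeasurable h μ ∧ ∀ᵐ ω ∂μ, -C ≤ h ω := fun n =>
    convexHull_min (by rintro _ ⟨k, -, rfl⟩; exact ⟨hb_meas k, hb_ge k⟩)
      (convex_setOf_aemeasurable.inter (convex_setOf_ae_le _))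
  have hL2 : ∀ n, ∀ h ∈ S n, MemLp (fun ω => Real.exp (-h ω)) 2 μ := fun n h hh =>
    memLp_exp_neg_of_ae_ge (hS_ge n h hh).1 (hS_ge n h hh).2 2
  -- By `dist_toLp_exp_neg_sq`, `J` is uniformly convex along midpoints, so its near-minimizers
  -- over the tails give a Cauchy sequence in `L²`.
  set J : (Ω → ℝ) → ℝ := fun h => ∫ ω, Real.exp (-h ω) ^ 2 ∂μ
  have hJ_below : ∀ n, BddBelow (J '' S n) := fun n =>
    ⟨0, by rintro _ ⟨h, -, rfl⟩; exact integral_nonneg fun ω => sq_nonneg _⟩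
  have hJ_le : ∀ h ∈ S 0, J h ≤ Real.exp C ^ 2 := fun h hh => by
    calc J h ≤ ∫ _, Real.exp C ^ 2 ∂μ := by
          refine integral_mono_ae (hL2 0 h hh).integrable_sq (integrable_const _) ?_
          filter_upwards [(hS_ge 0 h hh).2] with ω hω
          gcongr; linarith
      _ = Real.exp C ^ 2 := by simp
  have hmin : ∀ n, ∃ x ∈ S n, ∀ a ∈ S n, J x ≤ J a + 1 / (n + 1) := fun n =>
    exists_forall_le_add_of_bddBelow (hS_ne n) (hJ_below n) Nat.one_div_pos_of_nat
  choose x hxS hx_min using hmin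
  set y : ℕ → Lp ℝ 2 μ := fun n => (hL2 n (x n) (hxS n)).toLp _
  have hy : CauchySeq y := by
    refine cauchySeq_of_near_minimizers J S hS (hJ_below 0)
      ⟨_, by rintro _ ⟨h, hh, rfl⟩; exact hJ_le h hh⟩ (fun n => 1 / (n + 1 : ℝ))
      (fun n m h => Nat.one_div_le_one_div h) tendsto_one_div_add_atTop_nhds_zero_nat x y hxS
      hx_min fun n m hnm => ?_
    have ha : (1 / 2 : ℝ) • x n + (1 / 2 : ℝ) • x m ∈ S n :=
      convex_convexHull ℝ _ (hxS n) (hS hnm (hxS m)) (by norm_num) (by norm_num) (by norm_num)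
    exact ⟨_, ha, (dist_toLp_exp_neg_sq _ _).le⟩
  obtain ⟨κ, hκ, g, hg⟩ := exists_subseq_tendsto_ae_of_cauchySeq_toLp_exp_neg _ hy hbdd
    fun n => convexHull_mono (image_subset_range _ _) (hxS n)
  exact ⟨fun k => x (κ k), g, fun k => hS (hκ.id_le k) (hxS (κ k)), hg⟩

theorem ae_le_of_tendsto_of_mem_convexHull_tail {b φ : ℕ → Ω → ℝ} {g ψ : Ω → ℝ} {n : ℕ}
    (hφ : ∀ k, φ k ∈ convexHull ℝ (b '' Ici k))
    (hφg : ∀ᵐ ω ∂μ, Tendsto (fun k => φ k ω) atTop (𝓝 (g ω)))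
    (hψ : ∀ k ≥ n, ∀ᵐ ω ∂μ, ψ ω ≤ b k ω) : ∀ᵐ ω ∂μ, ψ ω ≤ g ω := by
  have hψφ : ∀ k ≥ n, ∀ᵐ ω ∂μ, ψ ω ≤ φ k ω := fun k hk =>
    convexHull_min (by rintro _ ⟨j, hj, rfl⟩; exact hψ j (hk.trans hj)) (convex_setOf_ae_le ψ)
      (hφ k)
  filter_upwards [hφg, ae_all_iff.2 fun k => hψφ (k + n) (n.le_add_left k)] with ω hlim hω
  exact ge_of_tendsto' ((tendsto_add_atTop_iff_nat n).2 hlim) hω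

end ConvexCombinations

section XSet

variable {Ω : Type*} [MeasurableSpace Ω] {Q : Measure Ω} {𝒳 : Set (Ω → ℝ)} {e : Ω → ℝ}

theorem convex_XSet (h𝒳 : Convex ℝ 𝒳) : Convex ℝ (XSet Q 𝒳 e) := by
  rintro x₁ ⟨hm₁, xb₁, hxb₁, hae₁⟩ x₂ ⟨hm₂, xb₂, hxb₂, hae₂⟩ a c ha hc hac
  refine ⟨convex_setOf_aemeasurable hm₁ hm₂ ha hc hac, a • xb₁ + c • xb₂,
    h𝒳 hxb₁ hxb₂ ha hc hac, ?_⟩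
  filter_upwards [hae₁, hae₂] with ω ⟨h₁, h₁'⟩ ⟨h₂, h₂'⟩
  simp only [Pi.add_apply, Pi.smul_apply, smul_eq_mul]
  have he : e ω = a * e ω + c * e ω := by rw [← add_mul, hac, one_mul]
  exact ⟨by positivity,
    by linarith [mul_le_mul_of_nonneg_left h₁' ha, mul_le_mul_of_nonneg_left h₂' hc]⟩

theorem mem_XSet_of_ae_le {x y : Ω → ℝ} (hx : x ∈ XSet Q 𝒳 e) (hy : AEMeasurable y Q)
    (hyx : ∀ᵐ ω ∂Q, 0 ≤ y ω ∧ y ω ≤ x ω) : y ∈ XSet Q 𝒳 e := by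
  obtain ⟨-, xb, hxb, hxe⟩ := hx
  refine ⟨hy, xb, hxb, ?_⟩
  filter_upwards [hxe, hyx] with ω h₁ h₂
  exact ⟨h₂.1, h₂.2.trans h₁.2⟩

theorem mem_XSet_of_tendstoInMeasure [IsProbabilityMeasure Q]
    (h𝒳meas : ∀ x ∈ 𝒳, AEMeasurable x Q) (h𝒳conv : Convex ℝ 𝒳)
    (h𝒳closed : ∀ (f : ℕ → Ω → ℝ) (x : Ω → ℝ), (∀ n, f n ∈ 𝒳) →
      TendstoInMeasure Q f atTop x → x ∈ 𝒳)
    (h𝒳bdd : ∀ lam : ℝ, BddInProb Q {x ∈ 𝒳 | ∀ᵐ ω ∂Q, lam ≤ x ω}) (he : MemLp e ⊤ Q)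
    {f : ℕ → Ω → ℝ} {x : Ω → ℝ} (hf : ∀ n, f n ∈ XSet Q 𝒳 e)
    (hfx : TendstoInMeasure Q f atTop x) : x ∈ XSet Q 𝒳 e := by
  obtain ⟨ns, -, hns⟩ := hfx.exists_seq_tendsto_ae
  choose xb hxb𝒳 hxb using fun n => (hf n).2
  set b : ℕ → Ω → ℝ := fun k => xb (ns k)
  have hyb : ∀ᵐ ω ∂Q, ∀ k, 0 ≤ f (ns k) ω ∧ f (ns k) ω ≤ e ω + b k ω :=
    ae_all_iff.2 fun k => hxb (ns k)
  obtain ⟨C, heC⟩ : ∃ C, ∀ᵐ ω ∂Q, |e ω| ≤ C :=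
    ⟨_, by simpa using ae_le_lpNorm_exponent_top he⟩
  have hb_ge : ∀ k, ∀ᵐ ω ∂Q, -C ≤ b k ω := fun k => by
    filter_upwards [hyb, heC] with ω hω heω
    linarith [(hω k).1.trans (hω k).2, le_abs_self (e ω)]
  have hb_hull : convexHull ℝ (range b) ⊆ {x ∈ 𝒳 | ∀ᵐ ω ∂Q, -C ≤ x ω} :=
    convexHull_min (range_subset_iff.2 fun k => ⟨hxb𝒳 _, hb_ge k⟩)
      (h𝒳conv.inter (convex_setOf_ae_le _))
  obtain ⟨φ, g, hφ, hφg⟩ := exists_tendsto_ae_of_mem_convexHull_tail b C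
    (fun k => h𝒳meas _ (hxb𝒳 _)) hb_ge ((h𝒳bdd (-C)).mono hb_hull)
  have hφ𝒳 : ∀ n, φ n ∈ 𝒳 := fun n =>
    (hb_hull (convexHull_mono (image_subset_range _ _) (hφ n))).1
  have hg𝒳 : g ∈ 𝒳 := h𝒳closed φ g hφ𝒳 (tendstoInMeasure_of_tendsto_ae
    (fun n => (h𝒳meas _ (hφ𝒳 n)).aestronglyMeasurable) hφg)
  have hyg : ∀ n, ∀ᵐ ω ∂Q, (⨅ j, f (ns (n + j)) ω) - e ω ≤ g ω := fun n =>
    ae_le_of_tendsto_of_mem_convexHull_tail (n := n) hφ hφg fun k hk => by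
      filter_upwards [hyb] with ω hω
      have hbdd : BddBelow (range fun j => f (ns (n + j)) ω) :=
        ⟨0, by rintro _ ⟨j, rfl⟩; exact (hω _).1⟩
      have : (⨅ j, f (ns (n + j)) ω) ≤ f (ns k) ω := by
        simpa [Nat.add_sub_cancel' hk] using ciInf_le hbdd (k - n)
      linarith [(hω k).2]
  refine ⟨aemeasurable_of_tendsto_metrizable_ae atTop (fun k => (hf (ns k)).1) hns, g, hg𝒳, ?_⟩
  filter_upwards [hns, hyb, ae_all_iff.2 hyg] with ω hlim hω hgω
  exact ⟨ge_of_tendsto' hlim fun k => (hω k).1,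
    le_of_tendsto_of_iInf_le hlim fun n => by linarith [hgω n]⟩

end XSet

/-- The set `𝒳(e_a)` of feasible risk transfers is convex, solid and closed under
convergence in `Q`-probability, provided `𝒳 ⊆ L⁰(Q)` is convex, closed under
convergence in `Q`-probability, and `{x ∈ 𝒳 : x ≥ λ}` is bounded in `Q`-probability
for every `λ ∈ ℝ`, and `e_a ∈ L^∞(Q)`. -/
theorem XSet_convex_solid_closed {Ω : Type*} [MeasurableSpace Ω]
    (Q : Measure Ω) [IsProbabilityMeasure Q]
    (𝒳 : Set (Ω → ℝ)) (h𝒳meas : ∀ x ∈ 𝒳, AEMeasurable x Q)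
    (h𝒳conv : Convex ℝ 𝒳)
    (h𝒳closed : ∀ (f : ℕ → Ω → ℝ) (x : Ω → ℝ), (∀ n, f n ∈ 𝒳) →
      TendstoInMeasure Q f atTop x → x ∈ 𝒳)
    (h𝒳bdd : ∀ lam : ℝ, BddInProb Q {x ∈ 𝒳 | ∀ᵐ ω ∂Q, lam ≤ x ω})
    (e_a : Ω → ℝ) (he_a : MemLp e_a ⊤ Q) :
    Convex ℝ (XSet Q 𝒳 e_a) ∧
      (∀ x ∈ XSet Q 𝒳 e_a, ∀ y : Ω → ℝ, AEMeasurable y Q →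
        (∀ᵐ ω ∂Q, 0 ≤ y ω ∧ y ω ≤ x ω) → y ∈ XSet Q 𝒳 e_a) ∧
      ∀ (f : ℕ → Ω → ℝ) (x : Ω → ℝ), (∀ n, f n ∈ XSet Q 𝒳 e_a) →
        TendstoInMeasure Q f atTop x → x ∈ XSet Q 𝒳 e_a :=
  ⟨convex_XSet h𝒳conv, fun _ hx _ hy hyx => mem_XSet_of_ae_le hx hy hyx,
    fun _ _ hf hfx => mem_XSet_of_tendstoInMeasure h𝒳meas h𝒳conv h𝒳closed h𝒳bdd he_a hf hfx⟩
end

section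
/- Let (Ω, F, Q) be a probability space, u : [0, ∞) → ℝ continuous, strictly increasing and concave, and let 𝒦 ⊆ L⁰₊(Q) be a convex and solid set of nonnegative random variables (i.e., if x ∈ 𝒦 and 0 ≤ y ≤ x a.s. then y ∈ 𝒦). Then the set C := {u ∘ x : x ∈ 𝒦} is convex: for all x, x̄ ∈ 𝒦 and β ∈ [0, 1], there exists z ∈ 𝒦 with u ∘ z = β (u ∘ x) + (1 − β)(u ∘ x̄) a.s. -/
open MeasureTheory Set
open scoped ENNReal

/-!
Pointwise, `β u(x) + (1-β) u(x̄)` lies between `u(x)` and `u(x̄)`, so by the intermediate value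
theorem it equals `u(s)` for some `s ≥ 0`; concavity and monotonicity of `u` force
`s ≤ β x + (1-β) x̄`, so solidity of `𝒦` puts the resulting `z` in `𝒦`.
The choice `z = s` is made measurably through the monotone generalized inverse of `u`.
-/

/-- Taking values in `ℝ≥0∞` makes the supremum meaningful for every `t` and the function
monotone on all of `ℝ`, hence measurable. -/
noncomputable def upperInverse (u : ℝ → ℝ) (t : ℝ) : ℝ≥0∞ :=
  ⨆ (s : ℝ) (_ : 0 ≤ s) (_ : u s ≤ t), ENNReal.ofReal s

theorem monotone_upperInverse (u : ℝ → ℝ) : Monotone (upperInverse u) :=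
  fun _ _ htt' => iSup₂_mono fun _ _ => iSup_mono' fun hs => ⟨hs.trans htt', le_rfl⟩

theorem upperInverse_apply {u : ℝ → ℝ} (hu : StrictMonoOn u (Ici 0)) {s : ℝ}
    (hs : 0 ≤ s) : upperInverse u (u s) = ENNReal.ofReal s :=
  le_antisymm
    (iSup₂_le fun _ hr => iSup_le fun hrs =>
      ENNReal.ofReal_le_ofReal ((hu.le_iff_le hr hs).1 hrs))
    (le_iSup₂_of_le s hs (le_iSup_of_le le_rfl le_rfl))

theorem exists_nonneg_le_combo_apply_eq {u : ℝ → ℝ} (hu_cont : ContinuousOn u (Ici 0))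
    (hu_mono : StrictMonoOn u (Ici 0)) (hu_conc : ConcaveOn ℝ (Ici 0) u) {a b β : ℝ}
    (ha : 0 ≤ a) (hb : 0 ≤ b) (hβ0 : 0 ≤ β) (hβ1 : β ≤ 1) :
    ∃ s, 0 ≤ s ∧ s ≤ β * a + (1 - β) * b ∧ u s = β * u a + (1 - β) * u b := by
  have hab : uIcc a b ⊆ Ici 0 := (ordConnected_Ici).uIcc_subset ha hb
  have hcombo : β * u a + (1 - β) * u b ∈ uIcc (u a) (u b) := by
    rw [← segment_eq_uIcc]
    exact ⟨β, 1 - β, hβ0, by linarith, by ring, rfl⟩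
  obtain ⟨s, hs, hus⟩ := intermediate_value_uIcc (hu_cont.mono hab) hcombo
  have hs0 : 0 ≤ s := hab hs
  have hm0 : 0 ≤ β * a + (1 - β) * b := by
    have : 0 ≤ 1 - β := by linarith
    positivity
  have hconc : β * u a + (1 - β) * u b ≤ u (β * a + (1 - β) * b) := by
    simpa only [smul_eq_mul] using hu_conc.2 ha hb hβ0 (by linarith) (by ring)
  refine ⟨s, hs0, ?_, hus⟩
  rw [← hu_mono.le_iff_le hs0 hm0, hus]
  exact hconc

theorem utility_levels_convex_general {Ω : Type*} [MeasurableSpace Ω]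
    (Q : Measure Ω)
    (u : ℝ → ℝ)
    (hu_cont : ContinuousOn u (Set.Ici 0))
    (hu_mono : StrictMonoOn u (Set.Ici 0))
    (hu_conc : ConcaveOn ℝ (Set.Ici 0) u)
    (𝒦 : Set (Ω → ℝ))
    (h𝒦 : ∀ x ∈ 𝒦, AEMeasurable x Q ∧ ∀ᵐ ω ∂Q, 0 ≤ x ω)
    (h𝒦conv : Convex ℝ 𝒦)
    (h𝒦solid : ∀ x ∈ 𝒦, ∀ y : Ω → ℝ, AEMeasurable y Q →
      (∀ᵐ ω ∂Q, 0 ≤ y ω ∧ y ω ≤ x ω) → y ∈ 𝒦) :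
    ∀ x ∈ 𝒦, ∀ xb ∈ 𝒦, ∀ β : ℝ, 0 ≤ β → β ≤ 1 →
      ∃ z ∈ 𝒦, ∀ᵐ ω ∂Q, u (z ω) = β * u (x ω) + (1 - β) * u (xb ω) := by
  intro x hx xb hxb β hβ0 hβ1
  obtain ⟨hx_meas, hx_nonneg⟩ := h𝒦 x hx
  obtain ⟨hxb_meas, hxb_nonneg⟩ := h𝒦 xb hxb
  -- a continuous, hence measurable, stand-in for `u`, equal to it at nonnegative arguments
  have hu_ext : Continuous fun t => u (max t 0) :=
    hu_cont.comp_continuous (continuous_id.max continuous_const) fun t => le_max_right t 0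
  set z : Ω → ℝ := fun ω =>
    (upperInverse u (β * u (max (x ω) 0) + (1 - β) * u (max (xb ω) 0))).toReal
  have hz_meas : AEMeasurable z Q :=
    ((monotone_upperInverse u).measurable.comp_aemeasurable
      (((hu_ext.measurable.comp_aemeasurable hx_meas).const_mul β).add
        ((hu_ext.measurable.comp_aemeasurable hxb_meas).const_mul (1 - β)))).ennreal_toReal
  have hz : ∀ᵐ ω ∂Q, 0 ≤ z ω ∧ z ω ≤ β * x ω + (1 - β) * xb ω ∧
      u (z ω) = β * u (x ω) + (1 - β) * u (xb ω) := by
    filter_upwards [hx_nonneg, hxb_nonneg] with ω ha hb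
    obtain ⟨s, hs0, hsm, hus⟩ :=
      exists_nonneg_le_combo_apply_eq hu_cont hu_mono hu_conc ha hb hβ0 hβ1
    have hzs : z ω = s := by
      simp only [z, max_eq_left ha, max_eq_left hb, ← hus, upperInverse_apply hu_mono hs0,
        ENNReal.toReal_ofReal hs0]
    exact hzs ▸ ⟨hs0, hsm, hus⟩
  have hm : β • x + (1 - β) • xb ∈ 𝒦 := h𝒦conv hx hxb hβ0 (by linarith) (by ring)
  refine ⟨z, h𝒦solid _ hm z hz_meas ?_, hz.mono fun ω hω => hω.2.2⟩
  exact hz.mono fun ω hω => ⟨hω.1, hω.2.1⟩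

/-- Convexity of the set of utility levels over a convex solid set of nonnegative
random variables: if `u : [0, ∞) → ℝ` is continuous, strictly increasing and concave
and `𝒦 ⊆ L⁰₊(Q)` is convex and solid, then for all `x, x̄ ∈ 𝒦` and `β ∈ [0, 1]` there
is `z ∈ 𝒦` with `u ∘ z = β (u ∘ x) + (1 - β) (u ∘ x̄)` almost surely; that is,
`C = {u ∘ x : x ∈ 𝒦}` is convex. -/
theorem utility_levels_convex {Ω : Type*} [MeasurableSpace Ω]
    (Q : Measure Ω) [IsProbabilityMeasure Q]
    (u : ℝ → ℝ)
    (hu_cont : ContinuousOn u (Set.Ici 0))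
    (hu_mono : StrictMonoOn u (Set.Ici 0))
    (hu_conc : ConcaveOn ℝ (Set.Ici 0) u)
    (𝒦 : Set (Ω → ℝ))
    (h𝒦 : ∀ x ∈ 𝒦, AEMeasurable x Q ∧ ∀ᵐ ω ∂Q, 0 ≤ x ω)
    (h𝒦conv : Convex ℝ 𝒦)
    (h𝒦solid : ∀ x ∈ 𝒦, ∀ y : Ω → ℝ, AEMeasurable y Q →
      (∀ᵐ ω ∂Q, 0 ≤ y ω ∧ y ω ≤ x ω) → y ∈ 𝒦) :
    ∀ x ∈ 𝒦, ∀ xb ∈ 𝒦, ∀ β : ℝ, 0 ≤ β → β ≤ 1 →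
      ∃ z ∈ 𝒦, ∀ᵐ ω ∂Q, u (z ω) = β * u (x ω) + (1 - β) * u (xb ω) :=
  utility_levels_convex_general Q u hu_cont hu_mono hu_conc 𝒦 h𝒦 h𝒦conv h𝒦solid
end

section
/- Let (Ω, F, Q) be a probability space and ρ : Ω → ℝ a measurable density with c₁ ≤ ρ ≤ c₂ a.s. for constants 0 < c₁ ≤ c₂ and E_Q[ρ] = 1; let P be the probability measure with dP/dQ = ρ. Fix α > 0 and e_a ∈ L^∞(Q), set m := E_P[e_a] and H(P|Q) := E_Q[ρ log ρ]. Define x* := −(1/α) log ρ + m + (1/α) H(P|Q). Then E_P[x*] = m (so x* satisfies the budget constraint E_P[x* − e_a] ≤ 0), and for every x ∈ L¹(Q) with E_P[x] ≤ m one has E_Q[1 − e^{−α x}] ≤ 1 − e^{−α m − H(P|Q)}, where E_Q[e^{−α x}] ∈ (0, ∞] is understood as the (possibly infinite) integral of the nonnegative function e^{−α x}; moreover E_Q[1 − e^{−α x*}] = 1 − e^{−α m − H(P|Q)}, so x* maximizes the expected exponential utility E_Q[1 − e^{−α ·}] over the budget set {x ∈ L¹(Q) : E_P[x − e_a] ≤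 0}. -/
/-!
The tangent line of `exp` at `log a` gives `e^y ≥ a (1 + y - log a)`. Taking `a = c ρ` with
`c = exp (E_P[y] - H(P|Q))` and integrating against `Q` yields the Gibbs variational inequality
`E_Q[e^y] ≥ exp (E_P[y] - H(P|Q))`. For `y = -α x` on the budget set the right side is at least
`e^{-α m - H}`, and `x*` is chosen so that `e^{-α x*} = e^{-α m - H} ρ`, whose `Q`-expectation
is exactly that bound.
-/

open MeasureTheory ENNReal

theorem Real.mul_one_add_sub_log_le_exp {a : ℝ} (ha : 0 < a) (y : ℝ) :
    a * (1 + y - Real.log a) ≤ Real.exp y :=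
  calc a * (1 + y - Real.log a) ≤ a * Real.exp (y - Real.log a) := by
        gcongr; linarith [Real.add_one_le_exp (y - Real.log a)]
    _ = Real.exp y := by rw [Real.exp_sub, Real.exp_log ha]; field_simp

theorem EReal.coe_sub_eq_sub_coe_ennreal_ofReal (a : ℝ) {c : ℝ} (hc : 0 ≤ c) :
    ((a - c : ℝ) : EReal) = (a : EReal) - ((ENNReal.ofReal c : ℝ≥0∞) : EReal) := by
  rw [EReal.coe_ennreal_ofReal, max_eq_left hc, EReal.coe_sub]

namespace MeasureTheory

variable {Ω : Type*} [MeasurableSpace Ω] {Q : Measure Ω}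

theorem memLp_top_of_ae_bounds {f : Ω → ℝ} {a b : ℝ} (hf : AEStronglyMeasurable f Q)
    (hab : ∀ᵐ ω ∂Q, a ≤ f ω ∧ f ω ≤ b) : MemLp f ⊤ Q :=
  memLp_top_of_bound hf (max |a| |b|) (hab.mono fun _ h => abs_le_max_abs_abs h.1 h.2)

theorem ofReal_integral_le_lintegral_ofReal {f : Ω → ℝ} (hf : Integrable f Q) :
    ENNReal.ofReal (∫ ω, f ω ∂Q) ≤ ∫⁻ ω, ENNReal.ofReal (f ω) ∂Q := by
  refine ENNReal.ofReal_le_of_le_toReal ?_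
  rw [integral_eq_lintegral_pos_part_sub_lintegral_neg_part hf]
  exact sub_le_self _ ENNReal.toReal_nonneg

theorem memLp_top_log_of_ae_bounds {ρ : Ω → ℝ} {c₁ c₂ : ℝ} (hc₁ : 0 < c₁)
    (hρ : Measurable ρ) (hρ_bdd : ∀ᵐ ω ∂Q, c₁ ≤ ρ ω ∧ ρ ω ≤ c₂) :
    MemLp (fun ω => Real.log (ρ ω)) ⊤ Q :=
  memLp_top_of_ae_bounds hρ.log.aestronglyMeasurable (hρ_bdd.mono fun _ h =>
    ⟨Real.log_le_log hc₁ h.1, Real.log_le_log (hc₁.trans_le h.1) h.2⟩)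

theorem integral_mul_const_mul_log_add {ρ : Ω → ℝ} (hρ_int : Integrable ρ Q)
    (hρ_one : ∫ ω, ρ ω ∂Q = 1) (hρlogρ : Integrable (fun ω => ρ ω * Real.log (ρ ω)) Q)
    (a b : ℝ) :
    ∫ ω, ρ ω * (a * Real.log (ρ ω) + b) ∂Q = a * ∫ ω, ρ ω * Real.log (ρ ω) ∂Q + b := by
  simp_rw [mul_add, mul_left_comm (ρ _) a, mul_comm (ρ _) b]
  rw [integral_add (hρlogρ.const_mul a) (hρ_int.const_mul b), integral_const_mul,
    integral_const_mul, hρ_one, mul_one]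

theorem lintegral_exp_log_add {ρ : Ω → ℝ} (hρ_pos : ∀ᵐ ω ∂Q, 0 < ρ ω)
    (hρ_int : Integrable ρ Q) (hρ_one : ∫ ω, ρ ω ∂Q = 1) (k : ℝ) :
    ∫⁻ ω, ENNReal.ofReal (Real.exp (Real.log (ρ ω) + k)) ∂Q =
      ENNReal.ofReal (Real.exp k) := by
  have hpt : ∀ᵐ ω ∂Q, ENNReal.ofReal (Real.exp (Real.log (ρ ω) + k)) =
      ENNReal.ofReal (ρ ω * Real.exp k) := by
    filter_upwards [hρ_pos] with ω hω
    rw [Real.exp_add, Real.exp_log hω]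
  rw [lintegral_congr_ae hpt,
    ← ofReal_integral_eq_lintegral_ofReal (hρ_int.mul_const _)
      (hρ_pos.mono fun _ h => (mul_pos h (Real.exp_pos k)).le),
    integral_mul_const, hρ_one, one_mul]

/-- Gibbs variational inequality `log E_Q[e^y] ≥ E_P[y] - H(P|Q)` for `P = ρ Q`. -/
theorem ofReal_exp_sub_relEntropy_le_lintegral_exp {ρ y : Ω → ℝ}
    (hρ_pos : ∀ᵐ ω ∂Q, 0 < ρ ω) (hρ_int : Integrable ρ Q) (hρ_one : ∫ ω, ρ ω ∂Q = 1)
    (hρlogρ : Integrable (fun ω => ρ ω * Real.log (ρ ω)) Q)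
    (hρy : Integrable (fun ω => ρ ω * y ω) Q) :
    ENNReal.ofReal (Real.exp (∫ ω, ρ ω * y ω ∂Q - ∫ ω, ρ ω * Real.log (ρ ω) ∂Q)) ≤
      ∫⁻ ω, ENNReal.ofReal (Real.exp (y ω)) ∂Q := by
  set c := Real.exp (∫ ω, ρ ω * y ω ∂Q - ∫ ω, ρ ω * Real.log (ρ ω) ∂Q) with hc
  have hc_pos : 0 < c := Real.exp_pos _
  set g : Ω → ℝ := fun ω =>
    c * (1 - Real.log c) * ρ ω + c * (ρ ω * y ω) - c * (ρ ω * Real.log (ρ ω))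
  have hg_int : Integrable g Q :=
    ((hρ_int.const_mul _).add (hρy.const_mul c)).sub (hρlogρ.const_mul c)
  have hg_integral : ∫ ω, g ω ∂Q = c := by
    have hlin : Integrable (fun ω => c * (1 - Real.log c) * ρ ω + c * (ρ ω * y ω)) Q :=
      (hρ_int.const_mul _).add (hρy.const_mul c)
    rw [integral_sub hlin (hρlogρ.const_mul c),
      integral_add (hρ_int.const_mul _) (hρy.const_mul c), integral_const_mul,
      integral_const_mul, integral_const_mul, hρ_one, hc, Real.log_exp]
    ring
  -- `g` is the tangent line of `exp` at `log (c ρ)`, evaluated at `y`.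
  have hg_le : ∀ᵐ ω ∂Q, g ω ≤ Real.exp (y ω) := by
    filter_upwards [hρ_pos] with ω hω
    have h := Real.mul_one_add_sub_log_le_exp (mul_pos hc_pos hω) (y ω)
    rw [Real.log_mul hc_pos.ne' hω.ne'] at h
    linarith
  calc ENNReal.ofReal c = ENNReal.ofReal (∫ ω, g ω ∂Q) := by rw [hg_integral]
    _ ≤ ∫⁻ ω, ENNReal.ofReal (g ω) ∂Q := ofReal_integral_le_lintegral_ofReal hg_int
    _ ≤ ∫⁻ ω, ENNReal.ofReal (Real.exp (y ω)) ∂Q :=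
        lintegral_mono_ae (hg_le.mono fun _ h => ENNReal.ofReal_le_ofReal h)

theorem ofReal_exp_neg_mul_integral_sub_le_lintegral {ρ x : Ω → ℝ}
    (hρ_pos : ∀ᵐ ω ∂Q, 0 < ρ ω) (hρ_int : Integrable ρ Q) (hρ_one : ∫ ω, ρ ω ∂Q = 1)
    (hρlogρ : Integrable (fun ω => ρ ω * Real.log (ρ ω)) Q)
    (hρx : Integrable (fun ω => ρ ω * x ω) Q) (α : ℝ) :
    ENNReal.ofReal
        (Real.exp (-(α * ∫ ω, ρ ω * x ω ∂Q) - ∫ ω, ρ ω * Real.log (ρ ω) ∂Q)) ≤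
      ∫⁻ ω, ENNReal.ofReal (Real.exp (-(α * x ω))) ∂Q := by
  have h := ofReal_exp_sub_relEntropy_le_lintegral_exp (y := fun ω => -(α * x ω))
    hρ_pos hρ_int hρ_one hρlogρ
    ((hρx.const_mul (-α)).congr (.of_forall fun ω => by ring))
  simpa only [mul_neg, mul_left_comm (ρ _) α, integral_neg, integral_const_mul] using h

end MeasureTheory

theorem exp_utility_optimal_payoff_general {Ω : Type*} [MeasurableSpace Ω]
    (Q : Measure Ω) [IsProbabilityMeasure Q]
    (ρ : Ω → ℝ) (hρ_meas : Measurable ρ)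
    (c₁ c₂ : ℝ) (hc₁ : 0 < c₁)
    (hρ_bdd : ∀ᵐ ω ∂Q, c₁ ≤ ρ ω ∧ ρ ω ≤ c₂)
    (hρ_one : ∫ ω, ρ ω ∂Q = 1)
    (α : ℝ) (hα : 0 < α)
    (e_a : Ω → ℝ) (he_a : MemLp e_a ⊤ Q)
    (m H : ℝ)
    (hm : m = ∫ ω, ρ ω * e_a ω ∂Q)
    (hH : H = ∫ ω, ρ ω * Real.log (ρ ω) ∂Q)
    (xstar : Ω → ℝ)
    (hxstar : xstar = fun ω => -(1 / α) * Real.log (ρ ω) + m + (1 / α) * H) :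
    ((∫ ω, ρ ω * xstar ω ∂Q = m) ∧ ∫ ω, ρ ω * (xstar ω - e_a ω) ∂Q ≤ 0) ∧
      (∀ x : Ω → ℝ, Integrable x Q → ∫ ω, ρ ω * (x ω - e_a ω) ∂Q ≤ 0 →
        (1 : EReal) -
            ((∫⁻ ω, ENNReal.ofReal (Real.exp (-(α * x ω))) ∂Q : ℝ≥0∞) : EReal) ≤
          ((1 - Real.exp (-(α * m) - H) : ℝ) : EReal)) ∧
      (1 : EReal) -
          ((∫⁻ ω, ENNReal.ofReal (Real.exp (-(α * xstar ω))) ∂Q : ℝ≥0∞) : EReal) =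
        ((1 - Real.exp (-(α * m) - H) : ℝ) : EReal) := by
  have hρ_pos : ∀ᵐ ω ∂Q, 0 < ρ ω := hρ_bdd.mono fun _ h => hc₁.trans_le h.1
  have hρ_top : MemLp ρ ⊤ Q := memLp_top_of_ae_bounds hρ_meas.aestronglyMeasurable hρ_bdd
  have hρ_int : Integrable ρ Q := hρ_top.integrable le_top
  have hρ_mul : ∀ x : Ω → ℝ, Integrable x Q → Integrable (fun ω => ρ ω * x ω) Q :=
    fun x hx => hx.mul_of_top_right hρ_top
  have hlog_int := (memLp_top_log_of_ae_bounds hc₁ hρ_meas hρ_bdd).integrable le_top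
  have hρlogρ := hρ_mul _ hlog_int
  have hxstar_int : Integrable xstar Q :=
    hxstar ▸ ((hlog_int.const_mul _).add (integrable_const m)).add (integrable_const _)
  have hbudget : ∀ x : Ω → ℝ, Integrable x Q →
      ∫ ω, ρ ω * (x ω - e_a ω) ∂Q = ∫ ω, ρ ω * x ω ∂Q - m := by
    intro x hx
    simp_rw [mul_sub]
    rw [integral_sub (hρ_mul x hx) (hρ_mul e_a (he_a.integrable le_top)), hm]
  have hmean : ∫ ω, ρ ω * xstar ω ∂Q = m := by
    simp_rw [hxstar, add_assoc]
    rw [integral_mul_const_mul_log_add hρ_int hρ_one hρlogρ, ← hH]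
    field_simp
    ring
  -- `x*` is the payoff whose marginal utility `α e^{-α x*}` is proportional to `dP/dQ`.
  have hxstar_exp : ∀ ω, -(α * xstar ω) = Real.log (ρ ω) + (-(α * m) - H) := fun ω => by
    rw [hxstar]; field_simp; ring
  rw [← EReal.coe_one, EReal.coe_sub_eq_sub_coe_ennreal_ofReal 1 (Real.exp_pos _).le]
  refine ⟨⟨hmean, by rw [hbudget xstar hxstar_int, hmean, sub_self]⟩,
    fun x hx hx_budget => ?_,
    by simp_rw [hxstar_exp, lintegral_exp_log_add hρ_pos hρ_int hρ_one]⟩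
  rw [hbudget x hx, sub_nonpos] at hx_budget
  have hgibbs := ofReal_exp_neg_mul_integral_sub_le_lintegral hρ_pos hρ_int hρ_one hρlogρ
    (hρ_mul x hx) α
  rw [← hH] at hgibbs
  refine EReal.sub_le_sub le_rfl
    (EReal.coe_ennreal_le_coe_ennreal_iff.mpr (le_trans ?_ hgibbs))
  gcongr

/-- Optimality of the exponential-utility optimal payoff (Lemma 11 of the paper).
Let `ρ = dP/dQ` be a density bounded between positive constants with `E_Q[ρ] = 1`,
`α > 0`, `e_a ∈ L^∞(Q)`, `m = E_P[e_a]`, `H = H(P|Q) = E_Q[ρ log ρ]`, and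
`x* = -(1/α) log ρ + m + (1/α) H`. Then `E_P[x*] = m` (so `E_P[x* - e_a] ≤ 0`), for
every `x ∈ L¹(Q)` with `E_P[x - e_a] ≤ 0` one has
`E_Q[1 - e^{-α x}] ≤ 1 - e^{-α m - H}` (the expectation of `e^{-α x}` being the
possibly infinite integral of a nonnegative function, so that the utility is valued in
`EReal`), and `x*` attains this bound. -/
theorem exp_utility_optimal_payoff {Ω : Type*} [MeasurableSpace Ω]
    (Q : Measure Ω) [IsProbabilityMeasure Q]
    (ρ : Ω → ℝ) (hρ_meas : Measurable ρ)
    (c₁ c₂ : ℝ) (hc₁ : 0 < c₁) (hc₁₂ : c₁ ≤ c₂)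
    (hρ_bdd : ∀ᵐ ω ∂Q, c₁ ≤ ρ ω ∧ ρ ω ≤ c₂)
    (hρ_one : ∫ ω, ρ ω ∂Q = 1)
    (α : ℝ) (hα : 0 < α)
    (e_a : Ω → ℝ) (he_a : MemLp e_a ⊤ Q)
    (m H : ℝ)
    (hm : m = ∫ ω, ρ ω * e_a ω ∂Q)
    (hH : H = ∫ ω, ρ ω * Real.log (ρ ω) ∂Q)
    (xstar : Ω → ℝ)
    (hxstar : xstar = fun ω => -(1 / α) * Real.log (ρ ω) + m + (1 / α) * H) :
    ((∫ ω, ρ ω * xstar ω ∂Q = m) ∧ ∫ ω, ρ ω * (xstar ω - e_a ω) ∂Q ≤ 0) ∧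
      (∀ x : Ω → ℝ, Integrable x Q → ∫ ω, ρ ω * (x ω - e_a ω) ∂Q ≤ 0 →
        (1 : EReal) -
            ((∫⁻ ω, ENNReal.ofReal (Real.exp (-(α * x ω))) ∂Q : ℝ≥0∞) : EReal) ≤
          ((1 - Real.exp (-(α * m) - H) : ℝ) : EReal)) ∧
      (1 : EReal) -
          ((∫⁻ ω, ENNReal.ofReal (Real.exp (-(α * xstar ω))) ∂Q : ℝ≥0∞) : EReal) =
        ((1 - Real.exp (-(α * m) - H) : ℝ) : EReal) :=
  exp_utility_optimal_payoff_general Q ρ hρ_meas c₁ c₂ hc₁ hρ_bdd hρ_one α hα e_a he_a m H hm hH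
    xstar hxstar
end
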